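/- Let d ≥ 1, let 𝒪 ⊆ ℝ^d be an open set, let p ≥ 2 and K > 0 and λ₁ > 0 be real numbers. Let u, v : 𝒪 → ℝ be differentiable functions such that u, v, ∇u and ∇v are square-integrable on 𝒪 and |u|^p and |v|^p are integrable on 𝒪, and suppose that the Poincaré inequality λ₁ ∫_𝒪 w(x)² dx ≤ ∫_𝒪 |∇w(x)|² dx holds for w = u, w = v and w = u − v. Then ∫_𝒪 |∇(u − v)(x)|² dx + ∫_𝒪 (|u(x)|^{p−2}u(x) − |v(x)|^{p−2}v(x))(u(x) − v(x)) dx − ( c_K(u) ∫_𝒪 u(x)(u(x) − v(x)) dx − c_K(v) ∫_𝒪 v(x)(u(x) − v(x)) dx ) ≥ −C(K) ∫_𝒪 (u(x) − v(x))² dx, where C(K) = [1 + (2 + p² · 2^{2p−3}) K λ₁^{−1}] K. Equivalently, for every Γ ≥ C(K), adding Γ ∫_𝒪 (u − v)² dx to the left-hand side gives a nonnegative quantity. -/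

import Mathlib

/-!
Write `c_K(w) = cutoff K (E(w) + P(w))`. Since `(u, u - v) = ‖u - v‖² + (v, u - v)`, the pairing
is `c_K(u) ‖u - v‖² + (c_K(u) - c_K(v)) (v, u - v)`, and the first term is at most `K ‖u - v‖²`.
The cut-off is Lipschitz with constant `K / m`, `m = max (E(u) + P(u)) (E(v) + P(v)) K`, while
by Cauchy–Schwarz (and Poincaré for `v`) both `|E(u) + P(u) - E(v) - P(v)|` and `|(v, u - v)|`
are `√m` times `L²`-quantities of `u - v`, so `m` cancels. These quantities are
`‖∇(u - v)‖`, `‖u - v‖` and the weighted norm `∫ (|u| + |v|)^(p-2) (u - v)²`; Young's inequality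
absorbs the product into `‖∇(u - v)‖²`, a multiple of `‖u - v‖²`, and `2^(1-p)` times the
weighted norm, which the monotone nonlinearity `|s|^(p-2) s` dominates pointwise.
-/

open MeasureTheory

/-- The cut-off coefficient `c_K(w)` of the paper: with
`E(w) = ∫_𝒪 ‖∇w‖²` and `P(w) = ∫_𝒪 |w|^p`, it equals `E(w) + P(w)` when
`E(w) + P(w) ≤ K`, and `K² / (E(w) + P(w))` otherwise. -/
noncomputable def cutoffCoeff {d : ℕ} (𝒪 : Set (EuclideanSpace ℝ (Fin d)))
    (p K : ℝ) (w : EuclideanSpace ℝ (Fin d) → ℝ) : ℝ :=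
  if (∫ x in 𝒪, ‖gradient w x‖ ^ 2) + (∫ x in 𝒪, |w x| ^ p) ≤ K then
    (∫ x in 𝒪, ‖gradient w x‖ ^ 2) + (∫ x in 𝒪, |w x| ^ p)
  else K ^ 2 / ((∫ x in 𝒪, ‖gradient w x‖ ^ 2) + (∫ x in 𝒪, |w x| ^ p))

namespace Real

theorem rpow_sub_rpow_le_mul {p s t : ℝ} (hp : 1 ≤ p) (ht : 0 ≤ t) (hts : t ≤ s) :
    s ^ p - t ^ p ≤ p * s ^ (p - 1) * (s - t) := by
  rcases (ht.trans hts).eq_or_lt with hs | hs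
  · obtain rfl : t = 0 := le_antisymm (hs ▸ hts) ht
    simp [← hs, zero_rpow (by linarith : p ≠ 0)]
  -- Bernoulli's inequality at `t / s`, multiplied by `s ^ p`
  have hb := one_add_mul_self_le_rpow_one_add (s := t / s - 1)
    (by linarith [div_nonneg ht hs.le]) hp
  rw [add_sub_cancel, div_rpow ht hs.le, le_div_iff₀ (rpow_pos_of_pos hs p)] at hb
  have hsp : s ^ p = s ^ (p - 1) * s := by rw [← rpow_add_one hs.ne', sub_add_cancel]
  have : (1 + p * (t / s - 1)) * s ^ p = s ^ p - p * s ^ (p - 1) * (s - t) := by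
    rw [hsp]; field_simp; ring
  linarith

theorem abs_abs_rpow_sub_abs_rpow_le {p : ℝ} (hp : 1 ≤ p) (a b : ℝ) :
    |(|a| ^ p - |b| ^ p)| ≤ p * (|a| + |b|) ^ (p - 1) * |a - b| := by
  wlog hba : |b| ≤ |a| generalizing a b
  · have := this b a (le_of_not_ge hba)
    rwa [abs_sub_comm, add_comm, abs_sub_comm b] at this
  have hmono : |b| ^ p ≤ |a| ^ p := rpow_le_rpow (abs_nonneg b) hba (by linarith)
  rw [abs_of_nonneg (sub_nonneg.2 hmono)]
  calc |a| ^ p - |b| ^ p ≤ p * |a| ^ (p - 1) * (|a| - |b|) :=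
        rpow_sub_rpow_le_mul hp (abs_nonneg b) hba
    _ ≤ p * (|a| + |b|) ^ (p - 1) * |a - b| := by
        gcongr
        · linarith [abs_nonneg b]
        · exact abs_sub_abs_le_abs_sub a b

theorem add_rpow_le_two_rpow_mul_add_rpow {x y r : ℝ} (hx : 0 ≤ x) (hy : 0 ≤ y) (hr : 0 ≤ r) :
    (x + y) ^ r ≤ 2 ^ r * (x ^ r + y ^ r) := by
  calc (x + y) ^ r ≤ (2 * max x y) ^ r := by
        gcongr; linarith [le_max_left x y, le_max_right x y]
    _ = 2 ^ r * max x y ^ r := mul_rpow zero_le_two (le_max_of_le_left hx)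
    _ ≤ 2 ^ r * (x ^ r + y ^ r) := by
        gcongr
        rcases max_cases x y with ⟨h, _⟩ | ⟨h, _⟩ <;> rw [h] <;>
          linarith [rpow_nonneg hx r, rpow_nonneg hy r]

theorem add_rpow_le_two_rpow_sub_one_mul {x y p : ℝ} (hx : 0 ≤ x) (hy : 0 ≤ y) (hp : 1 ≤ p) :
    (x + y) ^ p ≤ 2 ^ (p - 1) * (x ^ p + y ^ p) := by
  lift x to NNReal using hx
  lift y to NNReal using hy
  exact_mod_cast NNReal.rpow_add_le_mul_rpow_add_rpow x y hp

theorem rpow_sub_two_mul_sq {x p : ℝ} (hx : 0 ≤ x) (hp : 2 ≤ p) :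
    x ^ (p - 2) * x ^ 2 = x ^ p := by
  rw [← rpow_two, ← rpow_add' hx (by linarith), sub_add_cancel]

theorem two_rpow_mul_le_signed_rpow_sub_mul {p : ℝ} (hp : 2 ≤ p) (a b : ℝ) :
    2 ^ (1 - p) * ((|a| + |b|) ^ (p - 2) * (a - b) ^ 2)
      ≤ (|a| ^ (p - 2) * a - |b| ^ (p - 2) * b) * (a - b) := by
  set A := |a| ^ (p - 2)
  set B := |b| ^ (p - 2)
  have hp2 : 0 ≤ p - 2 := by linarith
  -- `(A a - B b)(a - b) = (A + B)(a - b)² / 2 + (A - B)(a² - b²) / 2`, and the last term is `≥ 0`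
  have hcross : 0 ≤ (A - B) * (a ^ 2 - b ^ 2) := by
    rw [← sq_abs a, ← sq_abs b]
    rcases le_total |a| |b| with h | h
    · exact mul_nonneg_of_nonpos_of_nonpos
        (sub_nonpos.2 (rpow_le_rpow (abs_nonneg a) h hp2))
        (sub_nonpos.2 (pow_le_pow_left₀ (abs_nonneg a) h 2))
    · exact mul_nonneg (sub_nonneg.2 (rpow_le_rpow (abs_nonneg b) h hp2))
        (sub_nonneg.2 (pow_le_pow_left₀ (abs_nonneg b) h 2))
  have hconst : (2 : ℝ) ^ (1 - p) * 2 ^ (p - 2) = 1 / 2 := by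
    rw [← rpow_add two_pos]; norm_num
  calc 2 ^ (1 - p) * ((|a| + |b|) ^ (p - 2) * (a - b) ^ 2)
      ≤ 2 ^ (1 - p) * (2 ^ (p - 2) * (A + B) * (a - b) ^ 2) := by
        gcongr
        exact add_rpow_le_two_rpow_mul_add_rpow (abs_nonneg a) (abs_nonneg b) hp2
    _ = 1 / 2 * (A + B) * (a - b) ^ 2 := by rw [← hconst]; ring
    _ ≤ (A * a - B * b) * (a - b) := by linear_combination (1 / 2) * hcross

theorem abs_signed_rpow_sub_mul_le {p : ℝ} (hp : 2 ≤ p) (a b : ℝ) :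
    |(|a| ^ (p - 2) * a - |b| ^ (p - 2) * b) * (a - b)| ≤ (|a| + |b|) ^ p := by
  have hp2 : 0 ≤ p - 2 := by linarith
  have ha : |a| ^ (p - 2) ≤ (|a| + |b|) ^ (p - 2) :=
    rpow_le_rpow (abs_nonneg a) (by linarith [abs_nonneg b]) hp2
  have hb : |b| ^ (p - 2) ≤ (|a| + |b|) ^ (p - 2) :=
    rpow_le_rpow (abs_nonneg b) (by linarith [abs_nonneg a]) hp2
  calc |(|a| ^ (p - 2) * a - |b| ^ (p - 2) * b) * (a - b)|
      ≤ (|a| ^ (p - 2) * |a| + |b| ^ (p - 2) * |b|) * (|a| + |b|) := by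
        rw [abs_mul]
        gcongr
        · refine (abs_sub _ _).trans_eq ?_
          rw [abs_mul, abs_mul, abs_of_nonneg (rpow_nonneg (abs_nonneg a) _),
            abs_of_nonneg (rpow_nonneg (abs_nonneg b) _)]
        · exact abs_sub _ _
    _ ≤ ((|a| + |b|) ^ (p - 2) * |a| + (|a| + |b|) ^ (p - 2) * |b|) * (|a| + |b|) := by
        gcongr
    _ = (|a| + |b|) ^ (p - 2) * (|a| + |b|) ^ 2 := by ring
    _ = (|a| + |b|) ^ p := rpow_sub_two_mul_sq (by positivity) hp

end Real

theorem young_cross_term_le {p K lam A Q D : ℝ} (hlam : 0 ≤ lam) (hA : 0 ≤ A) (hQ : 0 ≤ Q)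
    (hD : 0 ≤ D) :
    K * (2 * √A + p * √(2 ^ p) * √Q) * (√lam⁻¹ * √D)
      ≤ A + 2 ^ (1 - p) * Q + (1 + p ^ 2 * 2 ^ (2 * p - 3)) * K ^ 2 * lam⁻¹ * D := by
  set e := K * √lam⁻¹ * √D
  have he : e ^ 2 = K ^ 2 * lam⁻¹ * D := by
    rw [mul_pow, mul_pow, Real.sq_sqrt (inv_nonneg.2 hlam), Real.sq_sqrt hD]
  have hAe : 2 * √A * e ≤ A + e ^ 2 := by
    nlinarith [sq_nonneg (√A - e), Real.sq_sqrt hA]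
  set c : ℝ := 2 ^ (1 - p)
  have hc : 0 < c := by positivity
  have hpow : (2 : ℝ) ^ p = 4 * c * 2 ^ (2 * p - 3) := by
    rw [show (4 : ℝ) = 2 ^ (2 : ℝ) by norm_num, ← Real.rpow_add two_pos,
      ← Real.rpow_add two_pos]
    ring_nf
  -- weighted AM-GM `x y ≤ c x² + y² / (4 c)` with `x = √Q`, `y = p √(2 ^ p) e`
  have hQe : p * √(2 ^ p) * √Q * e ≤ c * Q + p ^ 2 * 2 ^ (2 * p - 3) * e ^ 2 := by
    have hy : (p * √(2 ^ p) * e) ^ 2 = 4 * c * (p ^ 2 * 2 ^ (2 * p - 3) * e ^ 2) := by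
      rw [mul_pow, mul_pow, Real.sq_sqrt (by positivity), hpow]; ring
    have hsq : 4 * c * (c * Q + p ^ 2 * 2 ^ (2 * p - 3) * e ^ 2)
        - 4 * c * (p * √(2 ^ p) * √Q * e) = (2 * c * √Q - p * √(2 ^ p) * e) ^ 2 := by
      linear_combination (-4 * c ^ 2) * Real.sq_sqrt hQ - hy
    refine le_of_mul_le_mul_left ?_ (by positivity : 0 < 4 * c)
    linarith [sq_nonneg (2 * c * √Q - p * √(2 ^ p) * e)]
  calc K * (2 * √A + p * √(2 ^ p) * √Q) * (√lam⁻¹ * √D)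
      = 2 * √A * e + p * √(2 ^ p) * √Q * e := by ring
    _ ≤ A + e ^ 2 + (c * Q + p ^ 2 * 2 ^ (2 * p - 3) * e ^ 2) := add_le_add hAe hQe
    _ = _ := by rw [he]; ring

noncomputable def cutoff (K s : ℝ) : ℝ := if s ≤ K then s else K ^ 2 / s

theorem cutoff_le {K s : ℝ} (hK : 0 ≤ K) : cutoff K s ≤ K := by
  unfold cutoff
  split_ifs with h
  · exact h
  · push Not at h
    rw [div_le_iff₀ (hK.trans_lt h)]
    nlinarith

theorem abs_cutoff_sub_mul_le_of_le {K s t : ℝ} (hK : 0 < K) (hs : 0 ≤ s) (hst : s ≤ t) :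
    |cutoff K s - cutoff K t| * max (max s t) K ≤ K * |s - t| := by
  rw [max_eq_right hst, abs_sub_comm s, abs_of_nonneg (sub_nonneg.2 hst)]
  unfold cutoff
  by_cases htK : t ≤ K
  · rw [if_pos (hst.trans htK), if_pos htK, max_eq_right htK, abs_sub_comm,
      abs_of_nonneg (sub_nonneg.2 hst), mul_comm]
  have ht : 0 < t := hK.trans (lt_of_not_ge htK)
  rw [if_neg htK, max_eq_left (le_of_not_ge htK)]
  by_cases hsK : s ≤ K
  · rw [if_pos hsK, ← abs_of_pos ht, ← abs_mul, abs_of_pos ht, sub_mul,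
      div_mul_cancel₀ _ ht.ne', abs_le]
    constructor <;> nlinarith
  · have hs' : 0 < s := hK.trans (lt_of_not_ge hsK)
    rw [if_neg hsK]
    have : K ^ 2 / s - K ^ 2 / t = K ^ 2 * (t - s) / (s * t) := by field_simp
    rw [this, abs_of_nonneg (by have := sub_nonneg.2 hst; positivity), div_mul_eq_mul_div,
      div_le_iff₀ (by positivity)]
    nlinarith [mul_nonneg (mul_nonneg (sub_nonneg.2 (le_of_not_ge hsK)) (sub_nonneg.2 hst))
      (mul_nonneg hK.le ht.le)]

theorem abs_cutoff_sub_mul_le {K s t : ℝ} (hK : 0 < K) (hs : 0 ≤ s) (ht : 0 ≤ t) :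
    |cutoff K s - cutoff K t| * max (max s t) K ≤ K * |s - t| := by
  rcases le_total s t with hst | hts
  · exact abs_cutoff_sub_mul_le_of_le hK hs hst
  · rw [abs_sub_comm, max_comm s, abs_sub_comm s]
    exact abs_cutoff_sub_mul_le_of_le hK ht hts

theorem cutoff_sub_mul_le {K s t a b c : ℝ} (hK : 0 < K) (hs : 0 ≤ s) (ht : 0 ≤ t)
    (hst : |s - t| ≤ √(max (max s t) K) * a) (hb : |b| ≤ √(max (max s t) K) * c) :
    (cutoff K s - cutoff K t) * b ≤ K * a * c := by
  set m := max (max s t) K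
  have hm : 0 < m := hK.trans_le (le_max_right _ _)
  refine le_of_mul_le_mul_right ?_ hm
  calc (cutoff K s - cutoff K t) * b * m
        ≤ |(cutoff K s - cutoff K t) * b * m| := le_abs_self _
    _ = |cutoff K s - cutoff K t| * m * |b| := by rw [abs_mul, abs_mul, abs_of_pos hm]; ring
    _ ≤ K * |s - t| * |b| :=
        mul_le_mul_of_nonneg_right (abs_cutoff_sub_mul_le hK hs ht) (abs_nonneg b)
    _ ≤ K * (√m * a) * (√m * c) := mul_le_mul (mul_le_mul_of_nonneg_left hst hK.le) hb
        (abs_nonneg b) (mul_nonneg hK.le ((abs_nonneg _).trans hst))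
    _ = K * a * c * m := by linear_combination (K * a * c) * Real.mul_self_sqrt hm.le

section Integrals

variable {X : Type*} [MeasurableSpace X] {μ : Measure X}

theorem abs_integral_mul_le_sqrt_mul_sqrt {f g : X → ℝ} (hf : MemLp f 2 μ) (hg : MemLp g 2 μ) :
    |∫ x, f x * g x ∂μ| ≤ √(∫ x, f x ^ 2 ∂μ) * √(∫ x, g x ^ 2 ∂μ) := by
  calc |∫ x, f x * g x ∂μ| ≤ ∫ x, |f x| * |g x| ∂μ := by
        simpa only [abs_mul] using abs_integral_le_integral_abs (f := fun x => f x * g x)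
    _ ≤ (∫ x, |f x| ^ (2 : ℝ) ∂μ) ^ (1 / (2 : ℝ))
          * (∫ x, |g x| ^ (2 : ℝ) ∂μ) ^ (1 / (2 : ℝ)) :=
        integral_mul_le_Lp_mul_Lq_of_nonneg Real.HolderConjugate.two_two
          (ae_of_all _ fun x => abs_nonneg _) (ae_of_all _ fun x => abs_nonneg _)
          (by rw [ENNReal.ofReal_ofNat]; exact hf.abs)
          (by rw [ENNReal.ofReal_ofNat]; exact hg.abs)
    _ = √(∫ x, f x ^ 2 ∂μ) * √(∫ x, g x ^ 2 ∂μ) := by simp [Real.sqrt_eq_rpow]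

theorem abs_integral_norm_sq_sub_le {E : Type*} [NormedAddCommGroup E] {F G : X → E}
    (hF : MemLp F 2 μ) (hG : MemLp G 2 μ) {M : ℝ} (hFM : ∫ x, ‖F x‖ ^ 2 ∂μ ≤ M)
    (hGM : ∫ x, ‖G x‖ ^ 2 ∂μ ≤ M) :
    |∫ x, ‖F x‖ ^ 2 ∂μ - ∫ x, ‖G x‖ ^ 2 ∂μ| ≤ 2 * √M * √(∫ x, ‖F x - G x‖ ^ 2 ∂μ) := by
  have hF2 := (memLp_two_iff_integrable_sq_norm hF.1).1 hF
  have hG2 := (memLp_two_iff_integrable_sq_norm hG.1).1 hG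
  have hdiff : MemLp (fun x => ‖F x - G x‖) 2 μ := (hF.sub hG).norm
  have hsum : MemLp (fun x => ‖F x‖ + ‖G x‖) 2 μ := hF.norm.add hG.norm
  have hsum2 : ∫ x, (‖F x‖ + ‖G x‖) ^ 2 ∂μ ≤ 2 ^ 2 * M :=
    calc ∫ x, (‖F x‖ + ‖G x‖) ^ 2 ∂μ ≤ ∫ x, (2 * ‖F x‖ ^ 2 + 2 * ‖G x‖ ^ 2) ∂μ :=
          integral_mono hsum.integrable_sq ((hF2.const_mul 2).add (hG2.const_mul 2))
            fun x => by nlinarith [sq_nonneg (‖F x‖ - ‖G x‖)]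
      _ ≤ 2 ^ 2 * M := by
          rw [integral_add (hF2.const_mul 2) (hG2.const_mul 2), integral_const_mul,
            integral_const_mul]
          linarith
  calc |∫ x, ‖F x‖ ^ 2 ∂μ - ∫ x, ‖G x‖ ^ 2 ∂μ|
      ≤ ∫ x, |‖F x‖ ^ 2 - ‖G x‖ ^ 2| ∂μ := by
        rw [← integral_sub hF2 hG2]; exact abs_integral_le_integral_abs
    _ ≤ ∫ x, ‖F x - G x‖ * (‖F x‖ + ‖G x‖) ∂μ :=
        integral_mono (hF2.sub hG2).abs (hdiff.integrable_mul hsum) fun x => by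
          rw [sq_sub_sq, abs_mul, abs_of_nonneg (by positivity : 0 ≤ ‖F x‖ + ‖G x‖), mul_comm]
          gcongr
          exact abs_norm_sub_norm_le _ _
    _ ≤ √(∫ x, ‖F x - G x‖ ^ 2 ∂μ) * √(∫ x, (‖F x‖ + ‖G x‖) ^ 2 ∂μ) :=
        (le_abs_self _).trans (abs_integral_mul_le_sqrt_mul_sqrt hdiff hsum)
    _ ≤ √(∫ x, ‖F x - G x‖ ^ 2 ∂μ) * √(2 ^ 2 * M) := by gcongr
    _ = 2 * √M * √(∫ x, ‖F x - G x‖ ^ 2 ∂μ) := by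
        rw [Real.sqrt_mul (by norm_num), Real.sqrt_sq zero_le_two]; ring

variable {u v : X → ℝ} {p : ℝ}

theorem integrable_abs_add_abs_rpow (hp : 1 ≤ p) (hu : AEStronglyMeasurable u μ)
    (hv : AEStronglyMeasurable v μ) (hup : Integrable (fun x => |u x| ^ p) μ)
    (hvp : Integrable (fun x => |v x| ^ p) μ) :
    Integrable (fun x => (|u x| + |v x|) ^ p) μ := by
  have := hu.aemeasurable
  have := hv.aemeasurable
  refine ((hup.add hvp).const_mul (2 ^ (p - 1))).mono'
    (by fun_prop : AEMeasurable _ μ).aestronglyMeasurable (ae_of_all _ fun x => ?_)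
  rw [Real.norm_eq_abs, abs_of_nonneg (by positivity)]
  exact Real.add_rpow_le_two_rpow_sub_one_mul (abs_nonneg _) (abs_nonneg _) hp

theorem integral_abs_add_abs_rpow_le (hp : 1 ≤ p) (hu : AEStronglyMeasurable u μ)
    (hv : AEStronglyMeasurable v μ) (hup : Integrable (fun x => |u x| ^ p) μ)
    (hvp : Integrable (fun x => |v x| ^ p) μ) :
    ∫ x, (|u x| + |v x|) ^ p ∂μ ≤ 2 ^ (p - 1) * (∫ x, |u x| ^ p ∂μ + ∫ x, |v x| ^ p ∂μ) := by
  rw [← integral_add hup hvp, ← integral_const_mul]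
  exact integral_mono (integrable_abs_add_abs_rpow hp hu hv hup hvp)
    ((hup.add hvp).const_mul _) fun x =>
      Real.add_rpow_le_two_rpow_sub_one_mul (abs_nonneg _) (abs_nonneg _) hp

theorem integrable_abs_add_abs_rpow_mul_sq (hp : 2 ≤ p) (hu : AEStronglyMeasurable u μ)
    (hv : AEStronglyMeasurable v μ) (hup : Integrable (fun x => |u x| ^ p) μ)
    (hvp : Integrable (fun x => |v x| ^ p) μ) :
    Integrable (fun x => (|u x| + |v x|) ^ (p - 2) * (u x - v x) ^ 2) μ := by
  have := hu.aemeasurable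
  have := hv.aemeasurable
  refine (integrable_abs_add_abs_rpow (by linarith) hu hv hup hvp).mono'
    (by fun_prop : AEMeasurable _ μ).aestronglyMeasurable (ae_of_all _ fun x => ?_)
  have hW : 0 ≤ |u x| + |v x| := by positivity
  have hsq : (u x - v x) ^ 2 ≤ (|u x| + |v x|) ^ 2 := by
    rw [← sq_abs]; exact pow_le_pow_left₀ (abs_nonneg _) (abs_sub _ _) 2
  rw [Real.norm_eq_abs, abs_of_nonneg (by positivity), ← Real.rpow_sub_two_mul_sq hW hp]
  exact mul_le_mul_of_nonneg_left hsq (Real.rpow_nonneg hW _)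

theorem abs_integral_abs_rpow_sub_le (hp : 2 ≤ p) (hu : AEStronglyMeasurable u μ)
    (hv : AEStronglyMeasurable v μ) (hup : Integrable (fun x => |u x| ^ p) μ)
    (hvp : Integrable (fun x => |v x| ^ p) μ) {M : ℝ} (huM : ∫ x, |u x| ^ p ∂μ ≤ M)
    (hvM : ∫ x, |v x| ^ p ∂μ ≤ M) :
    |∫ x, |u x| ^ p ∂μ - ∫ x, |v x| ^ p ∂μ|
      ≤ p * √(2 ^ p * M) * √(∫ x, (|u x| + |v x|) ^ (p - 2) * (u x - v x) ^ 2 ∂μ) := by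
  have := hu.aemeasurable
  have := hv.aemeasurable
  set W := fun x => |u x| + |v x|
  have hW : ∀ x, 0 ≤ W x := fun x => by positivity
  -- split `W ^ (p - 1) |u - v|` into two `L²` factors
  set f := fun x => W x ^ ((p - 2) / 2) * |u x - v x|
  set g := fun x => W x ^ (p / 2)
  have hf2 : ∀ x, f x ^ 2 = W x ^ (p - 2) * (u x - v x) ^ 2 := fun x => by
    rw [mul_pow, sq_abs, ← Real.rpow_mul_natCast (hW x)]; ring_nf
  have hg2 : ∀ x, g x ^ 2 = W x ^ p := fun x => by
    rw [← Real.rpow_mul_natCast (hW x)]; ring_nf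
  have hfg : ∀ x, f x * g x = W x ^ (p - 1) * |u x - v x| := fun x => by
    rw [mul_right_comm, ← Real.rpow_add' (hW x) (by linarith)]; ring_nf
  have hf : MemLp f 2 μ := (memLp_two_iff_integrable_sq
    (by fun_prop : AEMeasurable f μ).aestronglyMeasurable).2
      (by simpa only [hf2] using integrable_abs_add_abs_rpow_mul_sq hp hu hv hup hvp)
  have hg : MemLp g 2 μ := (memLp_two_iff_integrable_sq
    (by fun_prop : AEMeasurable g μ).aestronglyMeasurable).2
      (by simpa only [hg2] using integrable_abs_add_abs_rpow (by linarith) hu hv hup hvp)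
  have hWp : ∫ x, g x ^ 2 ∂μ ≤ 2 ^ p * M := by
    simp only [hg2]
    calc ∫ x, W x ^ p ∂μ ≤ 2 ^ (p - 1) * (∫ x, |u x| ^ p ∂μ + ∫ x, |v x| ^ p ∂μ) :=
          integral_abs_add_abs_rpow_le (by linarith) hu hv hup hvp
      _ ≤ 2 ^ (p - 1) * (2 * M) := by gcongr; linarith
      _ = 2 ^ p * M := by rw [← mul_assoc, ← Real.rpow_add_one two_ne_zero, sub_add_cancel]
  calc |∫ x, |u x| ^ p ∂μ - ∫ x, |v x| ^ p ∂μ|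
      ≤ ∫ x, |(|u x| ^ p - |v x| ^ p)| ∂μ := by
        rw [← integral_sub hup hvp]; exact abs_integral_le_integral_abs
    _ ≤ ∫ x, p * (f x * g x) ∂μ :=
        integral_mono (hup.sub hvp).abs ((hf.integrable_mul hg).const_mul p) fun x => by
          rw [hfg, ← mul_assoc]
          exact Real.abs_abs_rpow_sub_abs_rpow_le (by linarith) _ _
    _ = p * ∫ x, f x * g x ∂μ := integral_const_mul _ _
    _ ≤ p * (√(∫ x, f x ^ 2 ∂μ) * √(∫ x, g x ^ 2 ∂μ)) := mul_le_mul_of_nonneg_left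
        ((le_abs_self _).trans (abs_integral_mul_le_sqrt_mul_sqrt hf hg)) (by linarith)
    _ ≤ p * (√(∫ x, f x ^ 2 ∂μ) * √(2 ^ p * M)) := by gcongr
    _ = _ := by simp only [hf2]; ring

theorem two_rpow_mul_integral_le_integral_signed_rpow (hp : 2 ≤ p)
    (hu : AEStronglyMeasurable u μ) (hv : AEStronglyMeasurable v μ)
    (hup : Integrable (fun x => |u x| ^ p) μ) (hvp : Integrable (fun x => |v x| ^ p) μ) :
    2 ^ (1 - p) * ∫ x, (|u x| + |v x|) ^ (p - 2) * (u x - v x) ^ 2 ∂μ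
      ≤ ∫ x, (|u x| ^ (p - 2) * u x - |v x| ^ (p - 2) * v x) * (u x - v x) ∂μ := by
  have := hu.aemeasurable
  have := hv.aemeasurable
  have hsigned : Integrable
      (fun x => (|u x| ^ (p - 2) * u x - |v x| ^ (p - 2) * v x) * (u x - v x)) μ :=
    (integrable_abs_add_abs_rpow (by linarith) hu hv hup hvp).mono'
      (by fun_prop : AEMeasurable _ μ).aestronglyMeasurable
      (ae_of_all _ fun x => Real.abs_signed_rpow_sub_mul_le hp _ _)
  rw [← integral_const_mul]
  exact integral_mono ((integrable_abs_add_abs_rpow_mul_sq hp hu hv hup hvp).const_mul _)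
    hsigned fun x => Real.two_rpow_mul_le_signed_rpow_sub_mul hp _ _

end Integrals

theorem cutoff_pairing_le {X E : Type*} [MeasurableSpace X] {μ : Measure X}
    [NormedAddCommGroup E] {p K lam : ℝ} (hp : 2 ≤ p) (hK : 0 < K) (hlam : 0 < lam)
    {u v : X → ℝ} {F G : X → E} (hu : MemLp u 2 μ) (hv : MemLp v 2 μ) (hF : MemLp F 2 μ)
    (hG : MemLp G 2 μ) (hup : Integrable (fun x => |u x| ^ p) μ)
    (hvp : Integrable (fun x => |v x| ^ p) μ)
    (hPoincare : lam * ∫ x, v x ^ 2 ∂μ ≤ ∫ x, ‖G x‖ ^ 2 ∂μ) :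
    cutoff K (∫ x, ‖F x‖ ^ 2 ∂μ + ∫ x, |u x| ^ p ∂μ) * ∫ x, u x * (u x - v x) ∂μ
        - cutoff K (∫ x, ‖G x‖ ^ 2 ∂μ + ∫ x, |v x| ^ p ∂μ) * ∫ x, v x * (u x - v x) ∂μ
      ≤ ∫ x, ‖F x - G x‖ ^ 2 ∂μ
        + ∫ x, (|u x| ^ (p - 2) * u x - |v x| ^ (p - 2) * v x) * (u x - v x) ∂μ
        + (1 + (1 + p ^ 2 * 2 ^ (2 * p - 3)) * K * lam⁻¹) * K * ∫ x, (u x - v x) ^ 2 ∂μ := by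
  set Eu := ∫ x, ‖F x‖ ^ 2 ∂μ
  set Ev := ∫ x, ‖G x‖ ^ 2 ∂μ
  set Pu := ∫ x, |u x| ^ p ∂μ
  set Pv := ∫ x, |v x| ^ p ∂μ
  set A := ∫ x, ‖F x - G x‖ ^ 2 ∂μ
  set Q := ∫ x, (|u x| + |v x|) ^ (p - 2) * (u x - v x) ^ 2 ∂μ
  set D := ∫ x, (u x - v x) ^ 2 ∂μ
  set Iv := ∫ x, v x * (u x - v x) ∂μ
  set m := max (max (Eu + Pu) (Ev + Pv)) K
  have hEu : 0 ≤ Eu := integral_nonneg fun x => by positivity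
  have hEv : 0 ≤ Ev := integral_nonneg fun x => by positivity
  have hPu : 0 ≤ Pu := integral_nonneg fun x => by positivity
  have hPv : 0 ≤ Pv := integral_nonneg fun x => by positivity
  have hA : 0 ≤ A := integral_nonneg fun x => by positivity
  have hQ : 0 ≤ Q := integral_nonneg fun x => by positivity
  have hD : 0 ≤ D := integral_nonneg fun x => by positivity
  have hum : Eu + Pu ≤ m := le_max_of_le_left (le_max_left _ _)
  have hvm : Ev + Pv ≤ m := le_max_of_le_left (le_max_right _ _)
  have hm : 0 < m := hK.trans_le (le_max_right _ _)
  have henergy : |(Eu + Pu) - (Ev + Pv)| ≤ √m * (2 * √A + p * √(2 ^ p) * √Q) :=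
    calc |(Eu + Pu) - (Ev + Pv)| ≤ |Eu - Ev| + |Pu - Pv| := by
          rw [add_sub_add_comm]; exact abs_add_le _ _
      _ ≤ 2 * √m * √A + p * √(2 ^ p * m) * √Q := add_le_add
          (abs_integral_norm_sq_sub_le hF hG (by linarith) (by linarith))
          (abs_integral_abs_rpow_sub_le hp hu.1 hv.1 hup hvp (by linarith) (by linarith))
      _ = √m * (2 * √A + p * √(2 ^ p) * √Q) := by
          rw [Real.sqrt_mul (by positivity)]; ring
  have hv_sq : ∫ x, v x ^ 2 ∂μ ≤ m * lam⁻¹ := by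
    rw [← div_eq_mul_inv, le_div_iff₀ hlam]; linarith
  have hpairing : |Iv| ≤ √m * (√lam⁻¹ * √D) :=
    calc |Iv| ≤ √(∫ x, v x ^ 2 ∂μ) * √D := abs_integral_mul_le_sqrt_mul_sqrt hv (hu.sub hv)
      _ ≤ √(m * lam⁻¹) * √D := by gcongr
      _ = √m * (√lam⁻¹ * √D) := by rw [Real.sqrt_mul hm.le]; ring
  have hIuv : ∫ x, u x * (u x - v x) ∂μ = D + Iv := by
    have hD2 : Integrable (fun x => (u x - v x) ^ 2) μ := (hu.sub hv).integrable_sq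
    have hIv2 : Integrable (fun x => v x * (u x - v x)) μ := hv.integrable_mul (hu.sub hv)
    rw [← integral_add hD2 hIv2]
    exact integral_congr_ae (ae_of_all _ fun x => by ring)
  have hmono := two_rpow_mul_integral_le_integral_signed_rpow hp hu.1 hv.1 hup hvp
  rw [hIuv]
  calc cutoff K (Eu + Pu) * (D + Iv) - cutoff K (Ev + Pv) * Iv
      = cutoff K (Eu + Pu) * D + (cutoff K (Eu + Pu) - cutoff K (Ev + Pv)) * Iv := by ring
    _ ≤ K * D + (A + 2 ^ (1 - p) * Q + (1 + p ^ 2 * 2 ^ (2 * p - 3)) * K ^ 2 * lam⁻¹ * D) :=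
        add_le_add (mul_le_mul_of_nonneg_right (cutoff_le hK.le) hD)
          ((cutoff_sub_mul_le hK (by positivity) (by positivity) henergy hpairing).trans
            (young_cross_term_le hlam.le hA hQ hD))
    _ ≤ _ := by linear_combination hmono

section Gradient

variable {E : Type*} [NormedAddCommGroup E] [InnerProductSpace ℝ E] [CompleteSpace E]

theorem gradient_sub_apply {f g : E → ℝ} {x : E} (hf : DifferentiableAt ℝ f x)
    (hg : DifferentiableAt ℝ g x) : gradient (f - g) x = gradient f x - gradient g x := by
  simp only [gradient, fderiv_sub hf hg, map_sub]

theorem measurable_gradient [MeasurableSpace E] [BorelSpace E] [SecondCountableTopology E]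
    (f : E → ℝ) : Measurable (gradient f) :=
  (InnerProductSpace.toDual ℝ E).symm.continuous.measurable.comp (measurable_fderiv ℝ f)

end Gradient

theorem cutoffCoeff_eq_cutoff {d : ℕ} (𝒪 : Set (EuclideanSpace ℝ (Fin d))) (p K : ℝ)
    (w : EuclideanSpace ℝ (Fin d) → ℝ) :
    cutoffCoeff 𝒪 p K w = cutoff K ((∫ x in 𝒪, ‖gradient w x‖ ^ 2) + ∫ x in 𝒪, |w x| ^ p) :=
  rfl

theorem stmt_11_general (d : ℕ)
    (𝒪 : Set (EuclideanSpace ℝ (Fin d)))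
    (p K lam : ℝ) (hp : 2 ≤ p) (hK : 0 < K) (hlam : 0 < lam)
    (u v : EuclideanSpace ℝ (Fin d) → ℝ)
    (hu : Differentiable ℝ u) (hv : Differentiable ℝ v)
    (hu2 : IntegrableOn (fun x => (u x) ^ 2) 𝒪)
    (hv2 : IntegrableOn (fun x => (v x) ^ 2) 𝒪)
    (hgu2 : IntegrableOn (fun x => ‖gradient u x‖ ^ 2) 𝒪)
    (hgv2 : IntegrableOn (fun x => ‖gradient v x‖ ^ 2) 𝒪)
    (hup : IntegrableOn (fun x => |u x| ^ p) 𝒪)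
    (hvp : IntegrableOn (fun x => |v x| ^ p) 𝒪)
    (hPoincare : ∀ w : EuclideanSpace ℝ (Fin d) → ℝ,
      w = u ∨ w = v ∨ w = u - v →
      lam * ∫ x in 𝒪, (w x) ^ 2 ≤ ∫ x in 𝒪, ‖gradient w x‖ ^ 2) :
    (-(((1 + (2 + p ^ 2 * (2 : ℝ) ^ (2 * p - 3)) * K * lam⁻¹) * K)
        * (∫ x in 𝒪, (u x - v x) ^ 2))
      ≤ (∫ x in 𝒪, ‖gradient (u - v) x‖ ^ 2)
        + (∫ x in 𝒪, (|u x| ^ (p - 2) * u x - |v x| ^ (p - 2) * v x) * (u x - v x))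
        - (cutoffCoeff 𝒪 p K u * (∫ x in 𝒪, u x * (u x - v x))
            - cutoffCoeff 𝒪 p K v * (∫ x in 𝒪, v x * (u x - v x))))
    ∧ ∀ Γ : ℝ, ((1 + (2 + p ^ 2 * (2 : ℝ) ^ (2 * p - 3)) * K * lam⁻¹) * K) ≤ Γ →
        0 ≤ (∫ x in 𝒪, ‖gradient (u - v) x‖ ^ 2)
          + (∫ x in 𝒪, (|u x| ^ (p - 2) * u x - |v x| ^ (p - 2) * v x) * (u x - v x))
          - (cutoffCoeff 𝒪 p K u * (∫ x in 𝒪, u x * (u x - v x))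
              - cutoffCoeff 𝒪 p K v * (∫ x in 𝒪, v x * (u x - v x)))
          + Γ * (∫ x in 𝒪, (u x - v x) ^ 2) := by
  have hL2 : ∀ w : EuclideanSpace ℝ (Fin d) → ℝ, Differentiable ℝ w →
      IntegrableOn (fun x => w x ^ 2) 𝒪 → MemLp w 2 (volume.restrict 𝒪) := fun w hw hw2 =>
    (memLp_two_iff_integrable_sq hw.continuous.aestronglyMeasurable).2 hw2
  have hgradL2 : ∀ w : EuclideanSpace ℝ (Fin d) → ℝ,
      IntegrableOn (fun x => ‖gradient w x‖ ^ 2) 𝒪 → MemLp (gradient w) 2 (volume.restrict 𝒪) :=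
    fun w hw2 => (memLp_two_iff_integrable_sq_norm
      (measurable_gradient w).aestronglyMeasurable).2 hw2
  have key := cutoff_pairing_le hp hK hlam (hL2 u hu hu2) (hL2 v hv hv2) (hgradL2 u hgu2)
    (hgradL2 v hgv2) hup hvp (hPoincare v (Or.inr (Or.inl rfl)))
  simp only [← gradient_sub_apply (hu _) (hv _)] at key
  rw [cutoffCoeff_eq_cutoff, cutoffCoeff_eq_cutoff]
  have hD : 0 ≤ ∫ x in 𝒪, (u x - v x) ^ 2 := integral_nonneg fun x => sq_nonneg _
  have hC : (1 + (1 + p ^ 2 * 2 ^ (2 * p - 3)) * K * lam⁻¹) * K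
      ≤ (1 + (2 + p ^ 2 * 2 ^ (2 * p - 3)) * K * lam⁻¹) * K := by
    gcongr; linarith
  have hCD := mul_le_mul_of_nonneg_right hC hD
  exact ⟨by linarith, fun Γ hΓ => by linarith [mul_le_mul_of_nonneg_right hΓ hD]⟩

theorem stmt_11 (d : ℕ) (hd : 1 ≤ d)
    (𝒪 : Set (EuclideanSpace ℝ (Fin d))) (h𝒪 : IsOpen 𝒪)
    (p K lam : ℝ) (hp : 2 ≤ p) (hK : 0 < K) (hlam : 0 < lam)
    (u v : EuclideanSpace ℝ (Fin d) → ℝ)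
    (hu : Differentiable ℝ u) (hv : Differentiable ℝ v)
    (hu2 : IntegrableOn (fun x => (u x) ^ 2) 𝒪)
    (hv2 : IntegrableOn (fun x => (v x) ^ 2) 𝒪)
    (hgu2 : IntegrableOn (fun x => ‖gradient u x‖ ^ 2) 𝒪)
    (hgv2 : IntegrableOn (fun x => ‖gradient v x‖ ^ 2) 𝒪)
    (hup : IntegrableOn (fun x => |u x| ^ p) 𝒪)
    (hvp : IntegrableOn (fun x => |v x| ^ p) 𝒪)
    (hPoincare : ∀ w : EuclideanSpace ℝ (Fin d) → ℝ,
      w = u ∨ w = v ∨ w = u - v →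
      lam * ∫ x in 𝒪, (w x) ^ 2 ≤ ∫ x in 𝒪, ‖gradient w x‖ ^ 2) :
    (-(((1 + (2 + p ^ 2 * (2 : ℝ) ^ (2 * p - 3)) * K * lam⁻¹) * K)
        * (∫ x in 𝒪, (u x - v x) ^ 2))
      ≤ (∫ x in 𝒪, ‖gradient (u - v) x‖ ^ 2)
        + (∫ x in 𝒪, (|u x| ^ (p - 2) * u x - |v x| ^ (p - 2) * v x) * (u x - v x))
        - (cutoffCoeff 𝒪 p K u * (∫ x in 𝒪, u x * (u x - v x))
            - cutoffCoeff 𝒪 p K v * (∫ x in 𝒪, v x * (u x - v x))))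
    ∧ ∀ Γ : ℝ, ((1 + (2 + p ^ 2 * (2 : ℝ) ^ (2 * p - 3)) * K * lam⁻¹) * K) ≤ Γ →
        0 ≤ (∫ x in 𝒪, ‖gradient (u - v) x‖ ^ 2)
          + (∫ x in 𝒪, (|u x| ^ (p - 2) * u x - |v x| ^ (p - 2) * v x) * (u x - v x))
          - (cutoffCoeff 𝒪 p K u * (∫ x in 𝒪, u x * (u x - v x))
              - cutoffCoeff 𝒪 p K v * (∫ x in 𝒪, v x * (u x - v x)))
          + Γ * (∫ x in 𝒪, (u x - v x) ^ 2) :=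
  stmt_11_general d 𝒪 p K lam hp hK hlam u v hu hv hu2 hv2 hgu2 hgv2 hup hvp hPoincare
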